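/- arXiv:1405.6122 — 6 statements merged into one kernel-verified Lean document; each statement's English description precedes it below -/
import Mathlib

section
/- For Lennard-Jones potentials J1(z)=k1/z^12 - k2/z^6, J2(z)=J1(2z) (k1,k2>0), with δ1 the minimizer of J1 and γ the minimizer of J1+J2, it holds that J2(γ) > 2·J2((δ1+γ)/2). -/
/-!
Measured in units of `δ1`, the points `γ` and `(δ1 + γ) / 2` both lie in `[c, 1]` with
`c ^ 6 = 4097 / 4160`. In this range `J1(2z)` is negative and close to `-k2 / (64 δ1 ^ 6)`:
the repulsive term is of relative size `2⁻⁷` only. Doubling a value of `J2` therefore makes it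
far more negative than any other value of `J2` in the range.
-/

open Set

/-- `J1 (2 z)` in units of `k2 / δ1 ^ 6`, as a function of `p = (z / δ1) ^ 6`. -/
noncomputable def ljScaled (p : ℝ) : ℝ := 1 / (8192 * p ^ 2) - 1 / (64 * p)

lemma lj_two_mul_eq {k1 k2 δ a : ℝ} (hδ : 0 < δ) (hk : 2 * k1 = k2 * δ ^ 6) (ha : 0 < a) :
    k1 / (2 * (a * δ)) ^ 12 - k2 / (2 * (a * δ)) ^ 6 = k2 / δ ^ 6 * ljScaled (a ^ 6) := by
  have hk1 : k1 = k2 * δ ^ 6 / 2 := by linarith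
  rw [ljScaled, hk1]
  field_simp
  ring

lemma two_mul_ljScaled_lt {s t : ℝ} (ht : 3 / 4 ≤ t) (hs : 3 / 4 ≤ s) (hs1 : s ≤ 1) :
    2 * ljScaled s < ljScaled t := by
  have hrep : 1 / (8192 * s ^ 2) ≤ 1 / (8192 * (3 / 4) ^ 2) := by gcongr
  have hatt_s : 1 / (64 * 1) ≤ 1 / (64 * s) := by gcongr
  have hatt_t : 1 / (64 * t) ≤ 1 / (64 * (3 / 4)) := by gcongr
  have hrep_t : 0 < 1 / (8192 * t ^ 2) := by positivity
  unfold ljScaled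
  linarith

lemma rpow_one_div_six_pow_six {x : ℝ} (hx : 0 ≤ x) : (x ^ ((1 : ℝ) / 6)) ^ 6 = x := by
  rw [one_div]
  exact Real.rpow_inv_natCast_pow hx (by norm_num)

theorem stmt_3_general (k1 k2 : ℝ) (hk1 : 0 < k1) (hk2 : 0 < k2)
    (J1 J2 : ℝ → ℝ)
    (hJ1 : ∀ z ∈ Ioi (0:ℝ), J1 z = k1 / z ^ 12 - k2 / z ^ 6)
    (hJ2 : ∀ z, J2 z = J1 (2 * z))
    (δ1 γ : ℝ)
    (hδ1 : δ1 = (2 * k1 / k2) ^ ((1:ℝ)/6))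
    (hγ : γ = ((1 + (2:ℝ) ^ (-(12:ℝ))) / (1 + (2:ℝ) ^ (-(6:ℝ)))) ^ ((1:ℝ)/6) * δ1) :
    2 * J2 ((δ1 + γ) / 2) < J2 γ := by
  have hratio : (1 + (2:ℝ) ^ (-(12:ℝ))) / (1 + (2:ℝ) ^ (-(6:ℝ))) = 4097 / 4160 := by
    rw [show (-(12:ℝ)) = ((-12 : ℤ) : ℝ) by norm_num, show (-(6:ℝ)) = ((-6 : ℤ) : ℝ) by norm_num,
      Real.rpow_intCast, Real.rpow_intCast]
    norm_num
  rw [hratio] at hγ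
  set c : ℝ := (4097 / 4160 : ℝ) ^ ((1:ℝ)/6)
  have hc : 0 < c := by positivity
  have hc6 : c ^ 6 = 4097 / 4160 := rpow_one_div_six_pow_six (by norm_num)
  have hc1 : c ≤ 1 := Real.rpow_le_one (by norm_num) (by norm_num) (by norm_num)
  have hδ : 0 < δ1 := by rw [hδ1]; positivity
  have hδ6 : 2 * k1 = k2 * δ1 ^ 6 := by
    rw [hδ1, rpow_one_div_six_pow_six (by positivity)]
    field_simp
  have hJ2_scaled : ∀ a > 0, J2 (a * δ1) = k2 / δ1 ^ 6 * ljScaled (a ^ 6) := fun a ha => by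
    rw [hJ2, hJ1 _ (by simp only [mem_Ioi]; positivity), lj_two_mul_eq hδ hδ6 ha]
  have hmid : (δ1 + γ) / 2 = (1 + c) / 2 * δ1 := by rw [hγ]; ring
  have hmid6 : c ^ 6 ≤ ((1 + c) / 2) ^ 6 := by gcongr; linarith
  rw [hmid, hγ, hJ2_scaled _ (by positivity), hJ2_scaled _ hc, mul_left_comm]
  refine mul_lt_mul_of_pos_left (two_mul_ljScaled_lt ?_ ?_ ?_) (by positivity)
  · rw [hc6]; norm_num
  · rw [hc6] at hmid6; linarith
  · exact pow_le_one₀ (by positivity) (by linarith)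

theorem stmt_3 (k1 k2 : ℝ) (hk1 : 0 < k1) (hk2 : 0 < k2)
    (J1 J2 : ℝ → ℝ)
    (hJ1 : ∀ z ∈ Ioi (0:ℝ), J1 z = k1 / z ^ 12 - k2 / z ^ 6)
    (hJ2 : ∀ z, J2 z = J1 (2 * z))
    (δ1 γ : ℝ)
    (hδ1 : δ1 = (2 * k1 / k2) ^ ((1:ℝ)/6))
    (hγ : γ = ((1 + (2:ℝ) ^ (-(12:ℝ))) / (1 + (2:ℝ) ^ (-(6:ℝ)))) ^ ((1:ℝ)/6) * δ1)
    (hγmin : ∀ z ∈ Ioi (0:ℝ), z ≠ γ → J1 γ + J2 γ < J1 z + J2 z) :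
    2 * J2 ((δ1 + γ) / 2) < J2 γ :=
  stmt_3_general k1 k2 hk1 hk2 J1 J2 hJ1 hJ2 δ1 γ hδ1 hγ
end

section
/- For the Morse potential J1(z)=k1(1-e^{-k2(z-δ1)})^2 - k1 with k1,k2,δ1>0 and J2(z)=J1(2z), the unique minimizer γ of J_CB=J1+J2 satisfies δ1/2 < γ < δ1. -/
/-!
`J1'(z)` has the sign of `z - δ1`, since `J1` is a Morse well with its minimum at `δ1`.
At a critical point `J1'(γ) = -2 J1'(2γ)`, so `γ` and `2γ` lie strictly on opposite sides of `δ1`;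
as `δ1 > 0` this forces `γ < δ1 < 2γ`.
-/

open Real

noncomputable def morse (k1 k2 δ z : ℝ) : ℝ := k1 * (1 - exp (-k2 * (z - δ))) ^ 2 - k1

section

variable {k1 k2 : ℝ} (δ : ℝ)

theorem hasDerivAt_morse (z : ℝ) :
    HasDerivAt (morse k1 k2 δ)
      (2 * k1 * k2 * exp (-k2 * (z - δ)) * (1 - exp (-k2 * (z - δ)))) z := by
  have hexp : HasDerivAt (fun z => exp (-k2 * (z - δ))) (exp (-k2 * (z - δ)) * -k2) z := by
    simpa using (((hasDerivAt_id z).sub_const δ).const_mul (-k2)).exp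
  exact ((((hasDerivAt_const z 1).fun_sub hexp).fun_pow 2).const_mul k1).sub_const k1
    |>.congr_deriv (by ring)

theorem deriv_morse_pos_iff (hk1 : 0 < k1) (hk2 : 0 < k2) {z : ℝ} :
    0 < deriv (morse k1 k2 δ) z ↔ δ < z := by
  rw [(hasDerivAt_morse δ z).deriv, mul_pos_iff_of_pos_left (by positivity), sub_pos,
    exp_lt_one_iff, neg_mul, neg_lt_zero, mul_pos_iff_of_pos_left hk2, sub_pos]

theorem deriv_morse_neg_iff (hk1 : 0 < k1) (hk2 : 0 < k2) {z : ℝ} :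
    deriv (morse k1 k2 δ) z < 0 ↔ z < δ := by
  rw [(hasDerivAt_morse δ z).deriv, ← mul_zero (2 * k1 * k2 * exp (-k2 * (z - δ))),
    mul_lt_mul_iff_right₀ (by positivity), sub_neg,
    one_lt_exp_iff, neg_mul, neg_pos, ← mul_zero k2, mul_lt_mul_iff_right₀ hk2, sub_neg]

theorem deriv_morse_nonpos_iff (hk1 : 0 < k1) (hk2 : 0 < k2) {z : ℝ} :
    deriv (morse k1 k2 δ) z ≤ 0 ↔ z ≤ δ := by
  rw [← not_lt, ← not_lt, deriv_morse_pos_iff δ hk1 hk2]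

theorem deriv_morse_nonneg_iff (hk1 : 0 < k1) (hk2 : 0 < k2) {z : ℝ} :
    0 ≤ deriv (morse k1 k2 δ) z ↔ δ ≤ z := by
  rw [← not_lt, ← not_lt, deriv_morse_neg_iff δ hk1 hk2]

end

theorem stmt_6 (k1 k2 δ1 : ℝ) (hk1 : 0 < k1) (hk2 : 0 < k2) (hδ1 : 0 < δ1)
    (J1 : ℝ → ℝ)
    (hJ1 : ∀ z, J1 z = k1 * (1 - Real.exp (-k2 * (z - δ1))) ^ 2 - k1)
    (γ : ℝ)
    (hcrit : deriv J1 γ + 2 * deriv J1 (2 * γ) = 0) :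
    δ1 / 2 < γ ∧ γ < δ1 := by
  obtain rfl : J1 = morse k1 k2 δ1 := funext hJ1
  constructor
  · by_contra! hγ
    have hneg := (deriv_morse_neg_iff δ1 hk1 hk2).2 (show γ < δ1 by linarith)
    have hnonpos := (deriv_morse_nonpos_iff δ1 hk1 hk2).2 (show 2 * γ ≤ δ1 by linarith)
    linarith
  · by_contra! hγ
    have hnonneg := (deriv_morse_nonneg_iff δ1 hk1 hk2).2 hγ
    have hpos := (deriv_morse_pos_iff δ1 hk1 hk2).2 (show δ1 < 2 * γ by linarith)
    linarith
end

section
/- Let J0: ℝ → (-∞,∞] be a function with unique minimizer γ, strictly convex on (-∞,γ) on its domain, satisfying lim_{z→+∞} J0(z) = J0(∞) ∈ ℝ with J0(γ) < J0(∞), and J0 = J0** on (-∞,γ]. Let ℓ > 0 and denote by J0** the convex lower semicontinuous envelope of J0. Then for every ε > 0 there is η > 0 such that J0(z) - (J0**)'(ℓ)(z-ℓ) - J0**(ℓ) ≥ η for all z with |z - min{ℓ,γ}| ≥ ε. -/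
/-!
Let `g` be the gap between `J0` and the tangent line of `J0**` at `ℓ`. Since the tangent line
lies below `J0** ≤ J0`, `g ≥ 0`, and `g` vanishes at `min ℓ γ` (for `ℓ > γ` the envelope is flat
near `ℓ`). Strict convexity of `g` on `(-∞, γ]` and `J0 > J0(γ) = J0**` on `(γ, ∞)` make
`min ℓ γ` the only zero of `g`. Convexity also makes `g` antitone left of its minimum, and the
limit `L > J0(γ)` keeps `g ≥ J0 - J0(γ)` bounded away from `0` at `+∞`; so `g` is bounded below
by a positive constant off a compact set, on which a continuous positive function has a positive
minimum.
-/

open Set Filter Topology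

theorem ConvexOn.add_deriv_mul_sub_le {S : Set ℝ} {f : ℝ → ℝ} {x y : ℝ} (hf : ConvexOn ℝ S f)
    (hx : x ∈ S) (hy : y ∈ S) (hd : DifferentiableAt ℝ f x) :
    f x + deriv f x * (y - x) ≤ f y := by
  rcases lt_trichotomy y x with h | rfl | h
  · have hslope := hf.slope_le_deriv hy hx h hd
    rw [slope_def_field, div_le_iff₀ (sub_pos.2 h)] at hslope
    linarith
  · simp
  · have hslope := hf.deriv_le_slope hx hy h hd
    rw [slope_def_field, le_div_iff₀ (sub_pos.2 h)] at hslope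
    linarith

theorem ConvexOn.antitoneOn_of_isMinOn {s : Set ℝ} {f : ℝ → ℝ} {c : ℝ} (hf : ConvexOn ℝ s f)
    (hc : c ∈ s) (hmin : IsMinOn f s c) : AntitoneOn f (s ∩ Iic c) := by
  intro x hx y hy hxy
  have hy_seg : y ∈ segment ℝ x c := by
    rw [segment_eq_Icc (hxy.trans hy.2)]
    exact ⟨hxy, hy.2⟩
  exact (hf.le_on_segment hx.1 hc hy_seg).trans (max_le le_rfl (hmin hx.1))

theorem ContinuousOn.exists_pos_le_of_eventually_cocompact {X : Type*} [TopologicalSpace X]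
    {g : X → ℝ} {s : Set X} (hg : ContinuousOn g s) (hs : IsClosed s)
    (hpos : ∀ x ∈ s, 0 < g x) {δ : ℝ} (hδ : 0 < δ) (htail : ∀ᶠ x in cocompact X, δ ≤ g x) :
    ∃ η > 0, ∀ x ∈ s, η ≤ g x := by
  obtain ⟨K, hK, hKc⟩ := mem_cocompact.1 htail
  obtain ⟨η, hη, hηK⟩ := (hK.inter_left hs).exists_forall_le' (hg.mono inter_subset_left)
    fun x hx => hpos x hx.1
  refine ⟨min η δ, lt_min hη hδ, fun x hx => ?_⟩
  by_cases hxK : x ∈ K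
  · exact (min_le_left _ _).trans (hηK x ⟨hx, hxK⟩)
  · exact (min_le_right _ _).trans (hKc hxK)

noncomputable def tangentGap (f F : ℝ → ℝ) (ℓ z : ℝ) : ℝ := f z - deriv F ℓ * (z - ℓ) - F ℓ

theorem sub_le_tangentGap {f F : ℝ → ℝ} {ℓ : ℝ} (hconv : ConvexOn ℝ univ F)
    (hdiff : DifferentiableAt ℝ F ℓ) (z : ℝ) : f z - F z ≤ tangentGap f F ℓ z := by
  have := hconv.add_deriv_mul_sub_le (mem_univ ℓ) (mem_univ z) hdiff
  unfold tangentGap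
  linarith

theorem StrictConvexOn.tangentGap {s : Set ℝ} {f : ℝ → ℝ} (hf : StrictConvexOn ℝ s f)
    (F : ℝ → ℝ) (ℓ : ℝ) : StrictConvexOn ℝ s (tangentGap f F ℓ) := by
  have hsplit : _root_.tangentGap f F ℓ =
      f + ⇑(LinearMap.mul ℝ ℝ (-deriv F ℓ)) + fun _ => deriv F ℓ * ℓ - F ℓ := by
    funext z
    simp only [_root_.tangentGap, Pi.add_apply, LinearMap.mul_apply']
    ring
  rw [hsplit]
  exact (hf.add_convexOn (LinearMap.convexOn _ hf.1)).add_const _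

section

variable {J0 J0star : ℝ → ℝ} {γ ℓ : ℝ}

theorem envelope_le (hmin : ∀ z, z ≠ γ → J0 γ < J0 z)
    (hstar_le : ∀ z, z ≤ γ → J0star z = J0 z) (hstar_ge : ∀ z, γ ≤ z → J0star z = J0 γ)
    (z : ℝ) : J0star z ≤ J0 z := by
  rcases le_total z γ with h | h
  · exact (hstar_le z h).le
  · rw [hstar_ge z h]
    rcases eq_or_ne z γ with rfl | hne
    · exact le_rfl
    · exact (hmin z hne).le

theorem tangentGap_min_eq_zero (hstar_le : ∀ z, z ≤ γ → J0star z = J0 z)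
    (hstar_ge : ∀ z, γ ≤ z → J0star z = J0 γ) : tangentGap J0 J0star ℓ (min ℓ γ) = 0 := by
  rcases le_or_gt ℓ γ with h | h
  · rw [min_eq_left h, tangentGap, hstar_le ℓ h]
    ring
  · have hflat : J0star =ᶠ[𝓝 ℓ] fun _ => J0 γ :=
      eventually_of_mem (Ioi_mem_nhds h) fun x hx => hstar_ge x (le_of_lt hx)
    rw [min_eq_right h.le, tangentGap, hflat.deriv_eq, deriv_const, hstar_ge ℓ h.le]
    ring

theorem tangentGap_nonneg (hconv : ConvexOn ℝ univ J0star)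
    (hdiff : DifferentiableAt ℝ J0star ℓ) (hmin : ∀ z, z ≠ γ → J0 γ < J0 z)
    (hstar_le : ∀ z, z ≤ γ → J0star z = J0 z) (hstar_ge : ∀ z, γ ≤ z → J0star z = J0 γ)
    (z : ℝ) : 0 ≤ tangentGap J0 J0star ℓ z :=
  (sub_nonneg.2 (envelope_le hmin hstar_le hstar_ge z)).trans (sub_le_tangentGap hconv hdiff z)

theorem isMinOn_tangentGap (hconv : ConvexOn ℝ univ J0star)
    (hdiff : DifferentiableAt ℝ J0star ℓ) (hmin : ∀ z, z ≠ γ → J0 γ < J0 z)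
    (hstar_le : ∀ z, z ≤ γ → J0star z = J0 z) (hstar_ge : ∀ z, γ ≤ z → J0star z = J0 γ) :
    IsMinOn (tangentGap J0 J0star ℓ) univ (min ℓ γ) :=
  isMinOn_univ_iff.2 fun z => (tangentGap_min_eq_zero hstar_le hstar_ge).trans_le
    (tangentGap_nonneg hconv hdiff hmin hstar_le hstar_ge z)

theorem tangentGap_pos (hstrict : StrictConvexOn ℝ (Iic γ) J0)
    (hconv : ConvexOn ℝ univ J0star) (hdiff : DifferentiableAt ℝ J0star ℓ)
    (hmin : ∀ z, z ≠ γ → J0 γ < J0 z)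
    (hstar_le : ∀ z, z ≤ γ → J0star z = J0 z) (hstar_ge : ∀ z, γ ≤ z → J0star z = J0 γ)
    {z : ℝ} (hz : z ≠ min ℓ γ) : 0 < tangentGap J0 J0star ℓ z := by
  have hgmin := isMinOn_tangentGap hconv hdiff hmin hstar_le hstar_ge
  rcases le_or_gt z γ with hzγ | hzγ
  · by_contra! hle
    have hzmin : IsMinOn (tangentGap J0 J0star ℓ) (Iic γ) z :=
      fun y _ => hle.trans (tangentGap_nonneg hconv hdiff hmin hstar_le hstar_ge y)
    exact hz ((hstrict.tangentGap J0star ℓ).eq_of_isMinOn hzmin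
      (hgmin.on_subset (subset_univ _)) hzγ (min_le_right ℓ γ))
  · calc 0 < J0 z - J0star z := by rw [hstar_ge z hzγ.le]; exact sub_pos.2 (hmin z hzγ.ne')
      _ ≤ _ := sub_le_tangentGap hconv hdiff z

theorem eventually_atBot_le_tangentGap (hstrict : StrictConvexOn ℝ (Iic γ) J0)
    (hconv : ConvexOn ℝ univ J0star) (hdiff : DifferentiableAt ℝ J0star ℓ)
    (hmin : ∀ z, z ≠ γ → J0 γ < J0 z)
    (hstar_le : ∀ z, z ≤ γ → J0star z = J0 z) (hstar_ge : ∀ z, γ ≤ z → J0star z = J0 γ) :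
    ∀ᶠ z in atBot, tangentGap J0 J0star ℓ (min ℓ γ - 1) ≤ tangentGap J0 J0star ℓ z := by
  have hanti := (hstrict.tangentGap J0star ℓ).convexOn.antitoneOn_of_isMinOn (min_le_right ℓ γ)
    ((isMinOn_tangentGap hconv hdiff hmin hstar_le hstar_ge).on_subset (subset_univ _))
  have hsub : Iic (min ℓ γ) ⊆ Iic γ ∩ Iic (min ℓ γ) := fun x hx => ⟨hx.trans (min_le_right ℓ γ), hx⟩
  have hc1 : min ℓ γ - 1 ∈ Iic (min ℓ γ) := mem_Iic.2 (sub_le_self _ zero_le_one)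
  filter_upwards [eventually_le_atBot (min ℓ γ - 1)] with z hz
  exact (hanti.mono hsub) (hz.trans hc1) hc1 hz

theorem eventually_atTop_le_tangentGap {L : ℝ} (hconv : ConvexOn ℝ univ J0star)
    (hdiff : DifferentiableAt ℝ J0star ℓ) (hstar_ge : ∀ z, γ ≤ z → J0star z = J0 γ)
    (hlim : Tendsto J0 atTop (𝓝 L)) (hLγ : J0 γ < L) :
    ∀ᶠ z in atTop, (L - J0 γ) / 2 ≤ tangentGap J0 J0star ℓ z := by
  filter_upwards [eventually_ge_atTop γ,
    hlim.eventually_const_lt (show (L + J0 γ) / 2 < L by linarith)] with z hzγ hzL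
  calc (L - J0 γ) / 2 ≤ J0 z - J0star z := by rw [hstar_ge z hzγ]; linarith
    _ ≤ _ := sub_le_tangentGap hconv hdiff z

theorem exists_pos_eventually_cocompact_le_tangentGap {L : ℝ}
    (hstrict : StrictConvexOn ℝ (Iic γ) J0) (hconv : ConvexOn ℝ univ J0star)
    (hdiff : DifferentiableAt ℝ J0star ℓ) (hmin : ∀ z, z ≠ γ → J0 γ < J0 z)
    (hstar_le : ∀ z, z ≤ γ → J0star z = J0 z) (hstar_ge : ∀ z, γ ≤ z → J0star z = J0 γ)
    (hlim : Tendsto J0 atTop (𝓝 L)) (hLγ : J0 γ < L) :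
    ∃ δ > 0, ∀ᶠ z in cocompact ℝ, δ ≤ tangentGap J0 J0star ℓ z := by
  refine ⟨min (tangentGap J0 J0star ℓ (min ℓ γ - 1)) ((L - J0 γ) / 2),
    lt_min (tangentGap_pos hstrict hconv hdiff hmin hstar_le hstar_ge (sub_one_lt _).ne)
      (by linarith), ?_⟩
  rw [cocompact_eq_atBot_atTop, eventually_sup]
  exact ⟨(eventually_atBot_le_tangentGap hstrict hconv hdiff hmin hstar_le hstar_ge).mono
      fun z hz => (min_le_left _ _).trans hz,
    (eventually_atTop_le_tangentGap hconv hdiff hstar_ge hlim hLγ).mono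
      fun z hz => (min_le_right _ _).trans hz⟩

end

theorem stmt_11_general (J0 J0star : ℝ → ℝ) (γ L : ℝ)
    (hcont : Continuous J0)
    (hmin : ∀ z, z ≠ γ → J0 γ < J0 z)
    (hstrict : StrictConvexOn ℝ (Set.Iic γ) J0)
    (hlim : Filter.Tendsto J0 Filter.atTop (nhds L)) (hLγ : J0 γ < L)
    (hconv : ConvexOn ℝ Set.univ J0star)
    (hstar_le : ∀ z, z ≤ γ → J0star z = J0 z)
    (hstar_ge : ∀ z, γ ≤ z → J0star z = J0 γ)
    (ℓ : ℝ) (hdiff : DifferentiableAt ℝ J0star ℓ) :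
    ∀ ε > 0, ∃ η > 0, ∀ z, ε ≤ |z - min ℓ γ| →
      η ≤ J0 z - deriv J0star ℓ * (z - ℓ) - J0star ℓ := by
  intro ε hε
  have hpos : ∀ z ∈ {z : ℝ | ε ≤ |z - min ℓ γ|}, 0 < tangentGap J0 J0star ℓ z :=
    fun z (hz : ε ≤ |z - min ℓ γ|) =>
      tangentGap_pos hstrict hconv hdiff hmin hstar_le hstar_ge fun h => by
        rw [h, sub_self, abs_zero] at hz
        linarith
  obtain ⟨δ, hδ, htail⟩ := exists_pos_eventually_cocompact_le_tangentGap hstrict hconv hdiff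
    hmin hstar_le hstar_ge hlim hLγ
  have hgcont : Continuous (tangentGap J0 J0star ℓ) := by
    unfold tangentGap
    fun_prop
  exact hgcont.continuousOn.exists_pos_le_of_eventually_cocompact
    (isClosed_le continuous_const (continuous_id.sub continuous_const).abs) hpos hδ htail

theorem stmt_11 (J0 J0star : ℝ → ℝ) (γ L : ℝ)
    (hcont : Continuous J0)
    (hmin : ∀ z, z ≠ γ → J0 γ < J0 z)
    (hstrict : StrictConvexOn ℝ (Set.Iic γ) J0)
    (hlim : Filter.Tendsto J0 Filter.atTop (nhds L)) (hLγ : J0 γ < L)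
    (hconv : ConvexOn ℝ Set.univ J0star) (hlsc : LowerSemicontinuous J0star)
    (hstar_le : ∀ z, z ≤ γ → J0star z = J0 z)
    (hstar_ge : ∀ z, γ ≤ z → J0star z = J0 γ)
    (ℓ : ℝ) (hℓ : 0 < ℓ) (hdiff : DifferentiableAt ℝ J0star ℓ) :
    ∀ ε > 0, ∃ η > 0, ∀ z, ε ≤ |z - min ℓ γ| →
      η ≤ J0 z - deriv J0star ℓ * (z - ℓ) - J0star ℓ :=
  stmt_11_general J0 J0star γ L hcont hmin hstrict hlim hLγ hconv hstar_le hstar_ge ℓ hdiff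
end

section
/- Let J1, J2 satisfy [LJ1]–[LJ4], let γ denote the unique minimizer of J0 and δ1 the unique minimizer of J1. Then the boundary layer energy B(γ) defined by B(γ) = inf over N ∈ ℕ and sequences v: ℕ → ℝ with v^0 = 0 and v^{i+1} - v^i = γ for i ≥ N of [ (1/2)J1(v^1 - v^0) + Σ_{i≥0} { J2((v^{i+2}-v^i)/2) + (1/2)J1(v^{i+2}-v^{i+1}) + (1/2)J1(v^{i+1}-v^i) - J0(γ) } ] satisfies (1/2)J1(δ1) ≤ B(γ) ≤ (1/2)J1(γ). -/
/-! The bulk of the energy of any admissible sequence is a sum of terms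
`J2 ((a + b) / 2) + (J1 a + J1 b) / 2 - J0 γ`, each nonnegative because `J0` is defined by the
inf-convolution of `J1` with itself and `γ` minimizes `J0`; what remains is `J1 (v 1 - v 0) / 2`,
at least `J1 δ1 / 2`. Conversely the affine sequence `v i = i γ` makes every term vanish, since
`J0 γ = J1 γ + J2 γ`, and has energy exactly `J1 γ / 2`. -/

open Set

lemma le_of_forall_ne_lt {α β : Type*} [Preorder β] {f : α → β} {a : α}
    (h : ∀ z, z ≠ a → f a < f z) (z : α) : f a ≤ f z := by
  rcases eq_or_ne z a with rfl | hz
  · exact le_rfl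
  · exact (h z hz).le

lemma sInf_pairSum_le {J : ℝ → ℝ} (hJ : BddBelow (range J)) {a b z : ℝ} (h : a + b = 2 * z) :
    sInf {y : ℝ | ∃ z1 z2 : ℝ, z1 + z2 = 2 * z ∧ y = J z1 + J z2} ≤ J a + J b := by
  obtain ⟨m, hm⟩ := hJ
  refine csInf_le ⟨2 * m, ?_⟩ ⟨a, b, h, rfl⟩
  rintro y ⟨z1, z2, -, rfl⟩
  linarith [hm (mem_range_self z1), hm (mem_range_self z2)]

lemma min_le_J2_add_half_J1 {J0 J1 J2 : ℝ → ℝ} {γ : ℝ}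
    (hJ0 : ∀ z, J0 z = J2 z +
        (1/2) * sInf {y : ℝ | ∃ z1 z2 : ℝ, z1 + z2 = 2 * z ∧ y = J1 z1 + J1 z2})
    (hγ : ∀ z, J0 γ ≤ J0 z) (hJ1 : BddBelow (range J1)) (a b : ℝ) :
    J0 γ ≤ J2 ((a + b) / 2) + (1/2) * (J1 a + J1 b) := by
  have hconv := sInf_pairSum_le hJ1 (a := a) (b := b) (z := (a + b) / 2) (by ring)
  linarith [hγ ((a + b) / 2), hJ0 ((a + b) / 2)]

/-- The admissible energies in the definition of the boundary layer energy, with `c` in the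
role of `J0 γ`. -/
def layerEnergySet (J1 J2 : ℝ → ℝ) (c γ : ℝ) : Set ℝ :=
  {E : ℝ | ∃ (N : ℕ) (v : ℕ → ℝ), v 0 = 0 ∧
    (∀ i, N ≤ i → v (i+1) - v i = γ) ∧
    E = (1/2) * J1 (v 1 - v 0) +
      ∑' i : ℕ, (J2 ((v (i+2) - v i) / 2) + (1/2) * J1 (v (i+2) - v (i+1)) +
        (1/2) * J1 (v (i+1) - v i) - c)}

section layerEnergySet

variable {J1 J2 : ℝ → ℝ} {c γ : ℝ}

lemma half_le_of_mem_layerEnergySet {δ E : ℝ}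
    (hc : ∀ a b, c ≤ J2 ((a + b) / 2) + (1/2) * (J1 a + J1 b)) (hδ : ∀ z, J1 δ ≤ J1 z)
    (hE : E ∈ layerEnergySet J1 J2 c γ) : (1/2) * J1 δ ≤ E := by
  obtain ⟨N, v, -, -, rfl⟩ := hE
  -- `tsum_nonneg` needs no summability: a non-summable series has sum `0`.
  have hsum : 0 ≤ ∑' i : ℕ, (J2 ((v (i+2) - v i) / 2) + (1/2) * J1 (v (i+2) - v (i+1)) +
      (1/2) * J1 (v (i+1) - v i) - c) := by
    refine tsum_nonneg fun i => ?_
    have hi := hc (v (i+2) - v (i+1)) (v (i+1) - v i)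
    rw [show (v (i+2) - v (i+1) + (v (i+1) - v i)) / 2 = (v (i+2) - v i) / 2 by ring] at hi
    linarith
  linarith [hδ (v 1 - v 0)]

lemma half_mem_layerEnergySet (hc : c = J1 γ + J2 γ) :
    (1/2) * J1 γ ∈ layerEnergySet J1 J2 c γ := by
  refine ⟨0, fun i => (i : ℝ) * γ, by simp, fun i _ => by push_cast; ring, ?_⟩
  have hterm : ∀ i : ℕ, J2 ((((i+2 : ℕ) : ℝ) * γ - (i : ℝ) * γ) / 2) +
      (1/2) * J1 (((i+2 : ℕ) : ℝ) * γ - ((i+1 : ℕ) : ℝ) * γ) +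
      (1/2) * J1 (((i+1 : ℕ) : ℝ) * γ - (i : ℝ) * γ) - c = 0 := by
    intro i
    push_cast
    ring_nf
    rw [hc]
    ring
  rw [tsum_congr hterm, tsum_zero]
  push_cast
  ring_nf

end layerEnergySet

theorem stmt_15 (J1 J2 J0 : ℝ → ℝ) (γ δ1 : ℝ)
    (hJ0 : ∀ z, J0 z = J2 z +
        (1/2) * sInf {y : ℝ | ∃ z1 z2 : ℝ, z1 + z2 = 2 * z ∧ y = J1 z1 + J1 z2})
    (hγ : ∀ z, z ≠ γ → J0 γ < J0 z)
    (hJ0γ : J0 γ = J1 γ + J2 γ)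
    (hδ1 : ∀ z, z ≠ δ1 → J1 δ1 < J1 z)
    (Bγ : ℝ)
    (hBγ : Bγ = sInf {E : ℝ | ∃ (N : ℕ) (v : ℕ → ℝ), v 0 = 0 ∧
        (∀ i, N ≤ i → v (i+1) - v i = γ) ∧
        E = (1/2) * J1 (v 1 - v 0) +
          ∑' i : ℕ, (J2 ((v (i+2) - v i) / 2) + (1/2) * J1 (v (i+2) - v (i+1)) +
            (1/2) * J1 (v (i+1) - v i) - J0 γ)}) :
    (1/2) * J1 δ1 ≤ Bγ ∧ Bγ ≤ (1/2) * J1 γ := by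
  have hδ : ∀ z, J1 δ1 ≤ J1 z := le_of_forall_ne_lt hδ1
  have hc := min_le_J2_add_half_J1 hJ0 (le_of_forall_ne_lt hγ) ⟨J1 δ1, forall_mem_range.2 hδ⟩
  have hlow : ∀ E ∈ layerEnergySet J1 J2 (J0 γ) γ, (1/2) * J1 δ1 ≤ E :=
    fun _ hE => half_le_of_mem_layerEnergySet hc hδ hE
  have hmem : (1/2) * J1 γ ∈ layerEnergySet J1 J2 (J0 γ) γ := half_mem_layerEnergySet hJ0γ
  change Bγ = sInf (layerEnergySet J1 J2 (J0 γ) γ) at hBγ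
  subst hBγ
  exact ⟨le_csInf ⟨_, hmem⟩ hlow, csInf_le ⟨_, hlow⟩ hmem⟩
end

section
/- Let J1, J2 satisfy [LJ1]–[LJ4] with J1(γ) < 0, J2(γ) < 0, J2(δ1) < 0, and set B̃(n,k) = min{ B_AIF(n), B(γ) - (1/2 + n)J0(γ), -k·J0(γ) } where B_AIF(n) = B_IF(n-1) + B(γ) - 2J0(γ). Then: (i) B̃(n,1) = -J0(γ) for all n ≥ 1; (ii) B̃(1,k) = B(γ) - (3/2)J0(γ) for all k ≥ 2; (iii) B̃(n,k) = B_AIF(n) for all n ≥ 2, k ≥ 2. -/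
/-!
Write `j = J0(γ)`. The bounds on `B(γ)` and `B_IF` together with
`J0(γ) ≤ J1(δ1) + J2(δ1) < J1(δ1) ≤ J1(γ) < 0` place both `B(γ)` and `B_IF(n-1)` in the
interval `(j/2, 0)`. With `b, f ∈ (j/2, 0)` and `j < 0`, each case is a comparison of
three affine expressions in `-j > 0`: for `k = 1` the term `-j` is smallest because `f + b > j`
and `b > j/2`; for `n = 1` the middle term `b - 3j/2` wins because `f > j/2` and `b < 0`;
for `n, k ≥ 2` the first term wins because `f + b < 0`.
-/

/-- `B̃(n,k)` with `j = J0(γ)`, `b = B(γ)` and `f = B_IF(n-1)`. -/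
noncomputable def bTilde (j b f : ℝ) (n k : ℕ) : ℝ :=
  min (min (f + b - 2 * j) (b - (1/2 + (n : ℝ)) * j)) (-(k : ℝ) * j)

section

variable {j b f : ℝ} (hb : j / 2 < b ∧ b < 0) (hf : j / 2 < f ∧ f < 0)
include hb hf

theorem bTilde_right_one {n : ℕ} (hn : 1 ≤ n) : bTilde j b f n 1 = -j := by
  have hn' : (1 : ℝ) ≤ n := by exact_mod_cast hn
  have hj : j < 0 := by linarith
  unfold bTilde
  rw [Nat.cast_one, neg_one_mul, min_eq_right]
  refine le_min (by linarith) ?_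
  nlinarith

theorem bTilde_left_one {k : ℕ} (hk : 2 ≤ k) : bTilde j b f 1 k = b - (3/2) * j := by
  have hk' : (2 : ℝ) ≤ k := by exact_mod_cast hk
  have hj : j < 0 := by linarith
  unfold bTilde
  rw [Nat.cast_one, show (1/2 + 1 : ℝ) = 3/2 by norm_num]
  have middle_le_first : b - 3/2 * j ≤ f + b - 2 * j := by linarith
  have middle_le_last : b - 3/2 * j ≤ -(k : ℝ) * j := by nlinarith
  rw [min_eq_right middle_le_first, min_eq_left middle_le_last]

theorem bTilde_of_two_le {n k : ℕ} (hn : 2 ≤ n) (hk : 2 ≤ k) :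
    bTilde j b f n k = f + b - 2 * j := by
  have hn' : (2 : ℝ) ≤ n := by exact_mod_cast hn
  have hk' : (2 : ℝ) ≤ k := by exact_mod_cast hk
  have hj : j < 0 := by linarith
  unfold bTilde
  have first_le_middle : f + b - 2 * j ≤ b - (1/2 + (n : ℝ)) * j := by nlinarith
  have first_le_last : f + b - 2 * j ≤ -(k : ℝ) * j := by nlinarith
  rw [min_eq_left first_le_middle, min_eq_left first_le_last]

end

theorem stmt_17_general (J1 J2 J0 : ℝ → ℝ) (γ δ1 : ℝ)
    (hJ1γ : J1 γ < 0) (hJ2δ1 : J2 δ1 < 0)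
    (hδ1min : ∀ z, J1 δ1 ≤ J1 z)
    (hJ0le : J0 γ ≤ J1 δ1 + J2 δ1)
    (Bγ : ℝ) (BIF : ℕ → ℝ)
    (hBγ : (1/2) * J1 δ1 ≤ Bγ ∧ Bγ ≤ (1/2) * J1 γ)
    (hBIF : ∀ m, (1/2) * J1 δ1 ≤ BIF m ∧ BIF m ≤ (1/2) * J1 γ)
    (BAIF : ℕ → ℝ) (hBAIF : ∀ n, BAIF n = BIF (n - 1) + Bγ - 2 * J0 γ)
    (Btil : ℕ → ℕ → ℝ)
    (hBtil : ∀ n k, Btil n k =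
        min (min (BAIF n) (Bγ - (1/2 + (n:ℝ)) * J0 γ)) (-(k:ℝ) * J0 γ)) :
    (∀ n : ℕ, 1 ≤ n → Btil n 1 = -J0 γ) ∧
    (∀ k : ℕ, 2 ≤ k → Btil 1 k = Bγ - (3/2) * J0 γ) ∧
    (∀ n k : ℕ, 2 ≤ n → 2 ≤ k → Btil n k = BAIF n) := by
  have hJ0_lt : J0 γ < J1 δ1 := by linarith
  have hJ1δ1_le : J1 δ1 ≤ J1 γ := hδ1min γ
  have mem_interval : ∀ x, (1/2) * J1 δ1 ≤ x ∧ x ≤ (1/2) * J1 γ → J0 γ / 2 < x ∧ x < 0 :=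
    fun x hx => ⟨by linarith [hx.1], by linarith [hx.2]⟩
  have hb := mem_interval Bγ hBγ
  have hBtil_eq : ∀ n k, Btil n k = bTilde (J0 γ) Bγ (BIF (n - 1)) n k := by
    intro n k
    rw [hBtil, hBAIF, bTilde]
  refine ⟨fun n hn => ?_, fun k hk => ?_, fun n k hn hk => ?_⟩
  · rw [hBtil_eq, bTilde_right_one hb (mem_interval _ (hBIF _)) hn]
  · rw [hBtil_eq, bTilde_left_one hb (mem_interval _ (hBIF _)) hk]
  · rw [hBtil_eq, bTilde_of_two_le hb (mem_interval _ (hBIF _)) hn hk, hBAIF]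

theorem stmt_17 (J1 J2 J0 : ℝ → ℝ) (γ δ1 : ℝ)
    (hJ1γ : J1 γ < 0) (hJ2γ : J2 γ < 0) (hJ2δ1 : J2 δ1 < 0)
    (hδ1min : ∀ z, J1 δ1 ≤ J1 z)
    (hJ0γ : J0 γ = J1 γ + J2 γ)
    (hJ0le : J0 γ ≤ J1 δ1 + J2 δ1)
    (Bγ : ℝ) (BIF : ℕ → ℝ)
    (hBγ : (1/2) * J1 δ1 ≤ Bγ ∧ Bγ ≤ (1/2) * J1 γ)
    (hBIF : ∀ m, (1/2) * J1 δ1 ≤ BIF m ∧ BIF m ≤ (1/2) * J1 γ)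
    (BAIF : ℕ → ℝ) (hBAIF : ∀ n, BAIF n = BIF (n - 1) + Bγ - 2 * J0 γ)
    (Btil : ℕ → ℕ → ℝ)
    (hBtil : ∀ n k, Btil n k =
        min (min (BAIF n) (Bγ - (1/2 + (n:ℝ)) * J0 γ)) (-(k:ℝ) * J0 γ)) :
    (∀ n : ℕ, 1 ≤ n → Btil n 1 = -J0 γ) ∧
    (∀ k : ℕ, 2 ≤ k → Btil 1 k = Bγ - (3/2) * J0 γ) ∧
    (∀ n k : ℕ, 2 ≤ n → 2 ≤ k → Btil n k = BAIF n) :=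
  stmt_17_general J1 J2 J0 γ δ1 hJ1γ hJ2δ1 hδ1min hJ0le Bγ BIF hBγ hBIF BAIF hBAIF Btil hBtil
end

section
/- Let J1(z) = k1/z^12 - k2/z^6 (k1,k2>0) and J2(z)=J1(2z), with γ the minimizer of J_CB=J1+J2 and z_c = δ1((13/7)(1+2^{-11})/(1+2^{-5}))^{1/6}, δ1=(2k1/k2)^{1/6}. Define R(t) = J2((γ+t)/2) + (1/2)(J1(γ)+J1(t)) - J0(γ) - (3/2)(J_CB(t)-J0(γ)) for t > 0, where J0(γ)=J_CB(γ). Then R(γ) = 0, R'(γ) = 0, R'(t) ≥ 0 for 0 < t ≤ γ, and R'(t) ≤ 0 for γ ≤ t ≤ z_c; in particular R(t) ≤ 0 for all t ∈ (0, z_c]. -/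
/-! Writing `JCB z = a / z ^ 12 - b / z ^ 6` with `a = (1 + 2⁻¹²) k1` and `b = (1 + 2⁻⁶) k2`,
the minimality of `γ` forces the critical-point relation `b γ ^ 6 = 2 a`. Once `k2` is eliminated
through it, `R'(t)` is `γ - t` times a quotient of polynomials in `γ, t` with positive
coefficients. So `R` increases on `(0, γ]` and decreases on `[γ, ∞)`, and `R γ = 0` is its
maximum. -/

open Set

noncomputable def lennardJones (a b z : ℝ) : ℝ := a / z ^ 12 - b / z ^ 6

noncomputable def lennardJonesDeriv (a b z : ℝ) : ℝ := 6 * b / z ^ 7 - 12 * a / z ^ 13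

theorem hasDerivAt_lennardJones (a b : ℝ) {z : ℝ} (hz : z ≠ 0) :
    HasDerivAt (lennardJones a b) (lennardJonesDeriv a b z) z := by
  have h12 := (hasDerivAt_const z a).fun_div (hasDerivAt_pow 12 z) (pow_ne_zero 12 hz)
  have h6 := (hasDerivAt_const z b).fun_div (hasDerivAt_pow 6 z) (pow_ne_zero 6 hz)
  refine (h12.fun_sub h6).congr_deriv ?_
  simp only [lennardJonesDeriv]
  field_simp
  ring

theorem lennardJones_add_lennardJones_two_mul (a b z : ℝ) :
    lennardJones a b z + lennardJones a b (2 * z) =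
      lennardJones (4097 / 4096 * a) (65 / 64 * b) z := by
  simp only [lennardJones, mul_pow]
  ring

theorem lennardJonesDeriv_eq_zero_iff {a b z : ℝ} (hz : 0 < z) :
    lennardJonesDeriv a b z = 0 ↔ b * z ^ 6 = 2 * a := by
  rw [lennardJonesDeriv, sub_eq_zero, div_eq_div_iff (by positivity) (by positivity)]
  constructor <;> intro h <;> nlinarith [pow_pos hz 7, pow_pos hz 13]

theorem mul_pow_six_eq_of_isMinOn_lennardJones {f : ℝ → ℝ} {a b γ : ℝ} (hγ : 0 < γ)
    (hf : EqOn f (lennardJones a b) (Ioi 0)) (hmin : IsMinOn f (Ioi 0) γ) :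
    b * γ ^ 6 = 2 * a := by
  have hfγ : HasDerivAt f (lennardJonesDeriv a b γ) γ :=
    (hasDerivAt_lennardJones a b hγ.ne').congr_of_eventuallyEq
      (Filter.eventuallyEq_of_mem (Ioi_mem_nhds hγ) hf)
  rw [← lennardJonesDeriv_eq_zero_iff hγ]
  exact (hmin.isLocalMin (Ioi_mem_nhds hγ)).hasDerivAt_eq_zero hfγ

theorem le_of_deriv_sign_change {f : ℝ → ℝ} {a c x : ℝ} (hac : a < c)
    (hf : DifferentiableOn ℝ f (Ioi a)) (hleft : ∀ y ∈ Ioo a c, 0 ≤ deriv f y)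
    (hright : ∀ y ∈ Ioi c, deriv f y ≤ 0) (hx : a < x) : f x ≤ f c := by
  rcases le_total x c with hxc | hcx
  · have hmono : MonotoneOn f (Ioc a c) :=
      monotoneOn_of_deriv_nonneg (convex_Ioc a c) (hf.continuousOn.mono Ioc_subset_Ioi_self)
        (by rw [interior_Ioc]; exact hf.mono Ioo_subset_Ioi_self) (by rwa [interior_Ioc])
    exact hmono ⟨hx, hxc⟩ ⟨hac, le_rfl⟩ hxc
  · have hanti : AntitoneOn f (Ici c) :=
      antitoneOn_of_deriv_nonpos (convex_Ici c) (hf.continuousOn.mono (Ici_subset_Ioi.2 hac))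
        (by rw [interior_Ici]; exact hf.mono (Ioi_subset_Ioi hac.le)) (by rwa [interior_Ici])
    exact hanti self_mem_Ici hcx hcx

noncomputable def remainderCore (k1 k2 γ t : ℝ) : ℝ :=
  lennardJones k1 k2 (γ + t) + lennardJones k1 k2 t / 2 -
    3 / 2 * lennardJones (4097 / 4096 * k1) (65 / 64 * k2) t

noncomputable def remainderCoreDeriv (k1 k2 γ t : ℝ) : ℝ :=
  lennardJonesDeriv k1 k2 (γ + t) + lennardJonesDeriv k1 k2 t / 2 -
    3 / 2 * lennardJonesDeriv (4097 / 4096 * k1) (65 / 64 * k2) t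

theorem hasDerivAt_remainderCore (k1 k2 : ℝ) {γ t : ℝ} (hγ : 0 < γ) (ht : 0 < t) :
    HasDerivAt (remainderCore k1 k2 γ) (remainderCoreDeriv k1 k2 γ t) t := by
  have hshift :
      HasDerivAt (fun s => lennardJones k1 k2 (γ + s)) (lennardJonesDeriv k1 k2 (γ + t)) t := by
    simpa [Function.comp_def] using
      (hasDerivAt_lennardJones k1 k2 (by positivity : γ + t ≠ 0)).comp t
        ((hasDerivAt_id t).const_add γ)
  exact (hshift.add ((hasDerivAt_lennardJones k1 k2 ht.ne').div_const 2)).sub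
    ((hasDerivAt_lennardJones _ _ ht.ne').const_mul (3 / 2))

theorem exists_pos_remainderCoreDeriv_eq {k1 k2 γ t : ℝ} (hk1 : 0 < k1) (hγ : 0 < γ)
    (ht : 0 < t) (hcrit : 65 / 64 * k2 * γ ^ 6 = 2 * (4097 / 4096 * k1)) :
    ∃ c > 0, remainderCoreDeriv k1 k2 γ t = c * (γ - t) := by
  have hk2 : k2 = 4097 / 2080 * k1 / γ ^ 6 := by
    field_simp
    linarith
  -- `R'(t) / (γ - t)`: clear denominators and divide the numerator polynomial by `γ - t`
  refine ⟨3 * k1 * (532675 * γ ^ 18 + 7457450 * t * γ ^ 17 + 49006100 * t ^ 2 * γ ^ 16 +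
    201351150 * t ^ 3 * γ ^ 15 + 582213775 * t ^ 4 * γ ^ 14 + 1267766500 * t ^ 5 * γ ^ 13 +
    2181300093 * t ^ 6 * γ ^ 12 + 3088393202 * t ^ 7 * γ ^ 11 + 3732082781 * t ^ 8 * γ ^ 10 +
    3959447204 * t ^ 9 * γ ^ 9 + 3728046749 * t ^ 10 * γ ^ 8 + 3078853490 * t ^ 11 * γ ^ 7 +
    2164789053 * t ^ 12 * γ ^ 6 + 1244324452 * t ^ 13 * γ ^ 5 + 556729039 * t ^ 14 * γ ^ 4 +
    180849774 * t ^ 15 * γ ^ 3 + 37839892 * t ^ 16 * γ ^ 2 + 3842986 * t ^ 17 * γ +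
    12291 * t ^ 18) / (133120 * γ ^ 6 * t ^ 13 * (γ + t) ^ 13), by positivity, ?_⟩
  simp only [remainderCoreDeriv, lennardJonesDeriv, hk2]
  field_simp
  ring

theorem stmt_19_general (k1 k2 : ℝ) (hk1 : 0 < k1)
    (J1 J2 JCB : ℝ → ℝ)
    (hJ1 : ∀ z ∈ Ioi (0:ℝ), J1 z = k1 / z ^ 12 - k2 / z ^ 6)
    (hJ2 : ∀ z, J2 z = J1 (2 * z))
    (hJCB : ∀ z, JCB z = J1 z + J2 z)
    (zc : ℝ)
    (γ : ℝ) (hγpos : 0 < γ)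
    (hγmin : ∀ z ∈ Ioi (0:ℝ), z ≠ γ → JCB γ < JCB z)
    (R : ℝ → ℝ)
    (hR : ∀ t, R t = J2 ((γ + t) / 2) + (1/2) * (J1 γ + J1 t) - JCB γ -
        (3/2) * (JCB t - JCB γ)) :
    R γ = 0 ∧ deriv R γ = 0 ∧
    (∀ t, 0 < t → t ≤ γ → 0 ≤ deriv R t) ∧
    (∀ t, γ ≤ t → t ≤ zc → deriv R t ≤ 0) ∧
    (∀ t, 0 < t → t ≤ zc → R t ≤ 0) := by
  have hJCB_eq : EqOn JCB (lennardJones (4097 / 4096 * k1) (65 / 64 * k2)) (Ioi 0) := fun z hz => by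
    rw [hJCB, hJ2, hJ1 z hz, hJ1 (2 * z) (by simpa using hz),
      ← lennardJones_add_lennardJones_two_mul]
    rfl
  have hcrit : 65 / 64 * k2 * γ ^ 6 = 2 * (4097 / 4096 * k1) :=
    mul_pow_six_eq_of_isMinOn_lennardJones hγpos hJCB_eq <| isMinOn_iff.2 fun z hz =>
      (eq_or_ne z γ).elim (fun h => h ▸ le_rfl) fun h => (hγmin z hz h).le
  have hR_core : EqOn R (fun t => remainderCore k1 k2 γ t + (J1 γ + JCB γ) / 2) (Ioi 0) :=
    fun t ht => by
      have hγt : γ + t ∈ Ioi (0:ℝ) := add_pos hγpos ht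
      have hmid : 2 * ((γ + t) / 2) = γ + t := by ring
      simp only [hR, hJ2, hmid, hJ1 _ hγt, hJ1 t ht, hJCB_eq ht, remainderCore, lennardJones]
      ring
  have hR_deriv : ∀ t ∈ Ioi (0:ℝ), HasDerivAt R (remainderCoreDeriv k1 k2 γ t) t :=
    fun t ht => ((hasDerivAt_remainderCore k1 k2 hγpos ht).add_const _).congr_of_eventuallyEq
      (Filter.eventuallyEq_of_mem (Ioi_mem_nhds ht) hR_core)
  have hsign : ∀ t ∈ Ioi (0:ℝ), ∃ c > 0, deriv R t = c * (γ - t) := fun t ht =>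
    (hR_deriv t ht).deriv ▸ exists_pos_remainderCoreDeriv_eq hk1 hγpos ht hcrit
  have hRγ : R γ = 0 := by
    rw [hR, add_self_div_two, hJCB]
    ring
  have hR'_nonneg : ∀ t ∈ Ioc 0 γ, 0 ≤ deriv R t := fun t ht => by
    obtain ⟨c, hc, h⟩ := hsign t ht.1
    rw [h]
    exact mul_nonneg hc.le (sub_nonneg.2 ht.2)
  have hR'_nonpos : ∀ t, γ ≤ t → deriv R t ≤ 0 := fun t ht => by
    obtain ⟨c, hc, h⟩ := hsign t (hγpos.trans_le ht)
    rw [h]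
    exact mul_nonpos_of_nonneg_of_nonpos hc.le (sub_nonpos.2 ht)
  refine ⟨hRγ, le_antisymm (hR'_nonpos γ le_rfl) (hR'_nonneg γ ⟨hγpos, le_rfl⟩),
    fun t ht htγ => hR'_nonneg t ⟨ht, htγ⟩, fun t ht _ => hR'_nonpos t ht, fun t ht _ => ?_⟩
  rw [← hRγ]
  exact le_of_deriv_sign_change hγpos
    (fun t ht => (hR_deriv t ht).differentiableAt.differentiableWithinAt)
    (fun t ht => hR'_nonneg t (Ioo_subset_Ioc_self ht)) (fun t ht => hR'_nonpos t ht.le) ht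

theorem stmt_19 (k1 k2 : ℝ) (hk1 : 0 < k1) (hk2 : 0 < k2)
    (J1 J2 JCB : ℝ → ℝ)
    (hJ1 : ∀ z ∈ Ioi (0:ℝ), J1 z = k1 / z ^ 12 - k2 / z ^ 6)
    (hJ2 : ∀ z, J2 z = J1 (2 * z))
    (hJCB : ∀ z, JCB z = J1 z + J2 z)
    (δ1 zc : ℝ)
    (hδ1 : δ1 = (2 * k1 / k2) ^ ((1:ℝ)/6))
    (hzc : zc = δ1 * ((13/7) * (1 + (2:ℝ) ^ (-(11:ℝ))) / (1 + (2:ℝ) ^ (-(5:ℝ)))) ^ ((1:ℝ)/6))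
    (γ : ℝ) (hγpos : 0 < γ)
    (hγmin : ∀ z ∈ Ioi (0:ℝ), z ≠ γ → JCB γ < JCB z)
    (R : ℝ → ℝ)
    (hR : ∀ t, R t = J2 ((γ + t) / 2) + (1/2) * (J1 γ + J1 t) - JCB γ -
        (3/2) * (JCB t - JCB γ)) :
    R γ = 0 ∧ deriv R γ = 0 ∧
    (∀ t, 0 < t → t ≤ γ → 0 ≤ deriv R t) ∧
    (∀ t, γ ≤ t → t ≤ zc → deriv R t ≤ 0) ∧
    (∀ t, 0 < t → t ≤ zc → R t ≤ 0) :=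
  stmt_19_general k1 k2 hk1 J1 J2 JCB hJ1 hJ2 hJCB zc γ hγpos hγmin R hR
end
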